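/- For every λ-term t, the crumbling ⌊t⌋ is well-named: all variables in its domain are pairwise distinct, the domain is disjoint from the bound variables, and whenever ⌊t⌋ = E₁[z←b]E₂ then z does not occur free in b nor in E₂. -/

import Mathlib

/-- λ-terms -/
inductive Tm where
  | var : ℕ → Tm
  | lam : ℕ → Tm → Tm
  | app : Tm → Tm → Tm
deriving DecidableEq

def Tm.fv : Tm → Finset ℕ
  | .var x => {x}
  | .lam x t => t.fv.erase x
  | .app t u => t.fv ∪ u.fv

def Tm.isValue : Tm → Prop
  | .var _ => True
  | .lam _ _ => True
  | .app _ _ => False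

def Tm.subst : Tm → ℕ → Tm → Tm
  | .var x, z, s => if x = z then s else .var x
  | .lam x t, z, s => if x = z then .lam x t else .lam x (t.subst z s)
  | .app t u, z, s => .app (t.subst z s) (u.subst z s)

def Tm.size : Tm → ℕ
  | .var _ => 1
  | .lam _ t => t.size + 1
  | .app t u => t.size + u.size + 1

/-- Right v-contexts: R ::= ⟨·⟩ | t R | R v -/
inductive RCtx where
  | hole : RCtx
  | appL : Tm → RCtx → RCtx
  | appR : RCtx → Tm → RCtx

def RCtx.wf : RCtx → Prop
  | .hole => True
  | .appL _ R => R.wf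
  | .appR R v => R.wf ∧ v.isValue

def RCtx.plug : RCtx → Tm → Tm
  | .hole, t => t
  | .appL u R, t => .app u (R.plug t)
  | .appR R v, t => .app (R.plug t) v

def RCtx.comp : RCtx → RCtx → RCtx
  | .hole, R' => R'
  | .appL u R, R' => .appL u (R.comp R')
  | .appR R v, R' => .appR (R.comp R') v

/-- weak call-by-value reduction -/
def BetaV (t u : Tm) : Prop :=
  ∃ R : RCtx, R.wf ∧ ∃ x body v, Tm.isValue v ∧
    t = R.plug (.app (.lam x body) v) ∧ u = R.plug (body.subst x v)

/-- general one-hole contexts -/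
inductive PCtx where
  | hole : PCtx
  | lam : ℕ → PCtx → PCtx
  | appL : PCtx → Tm → PCtx
  | appR : Tm → PCtx → PCtx

def PCtx.plug : PCtx → Tm → Tm
  | .hole, t => t
  | .lam x C, t => .lam x (C.plug t)
  | .appL C u, t => .app (C.plug t) u
  | .appR u C, t => .app u (C.plug t)

/-- a one-hole context is a right v-context -/
def PCtx.isRight : PCtx → Prop
  | .hole => True
  | .lam _ _ => False
  | .appL C u => C.isRight ∧ u.isValue
  | .appR _ C => C.isRight

/-- `HS t z C` : C is the result of replacing the (unique) occurrence of z in t by a hole -/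
inductive HS : Tm → ℕ → PCtx → Prop
  | var {z} : HS (.var z) z .hole
  | lam {x z t C} : x ≠ z → HS t z C → HS (.lam x t) z (.lam x C)
  | appL {z t u C} : HS t z C → z ∉ u.fv → HS (.app t u) z (.appL C u)
  | appR {z t u C} : z ∉ t.fv → HS u z C → HS (.app t u) z (.appR t C)

-- Crumbled syntax: bites and environments.  The binder `none` stands for `*`. 
mutual
inductive Bite where
  | app : ℕ → ℕ → Bite
  | lamVar : ℕ → ℕ → Bite      -- λx.[*←y]
  | lam : ℕ → Env → Bite       -- λx.E
inductive Env where
  | nil : Env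
  | cons : Env → Option ℕ → Bite → Env   -- E[x←b]
end

def Env.append : Env → Env → Env
  | E, .nil => E
  | E, .cons E' x b => .cons (E.append E') x b

mutual
def Bite.fv : Bite → Finset ℕ
  | .app x y => {x, y}
  | .lamVar x y => ({y} : Finset ℕ) \ {x}
  | .lam x E => E.fv.erase x
def Env.fv : Env → Finset ℕ
  | .nil => ∅
  | .cons E (some z) b => (E.fv.erase z) ∪ b.fv
  | .cons E none b => E.fv ∪ b.fv
end

mutual
def Bite.bv : Bite → Finset ℕ
  | .app _ _ => ∅
  | .lamVar x _ => {x}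
  | .lam x E => insert x E.bv
def Env.bv : Env → Finset ℕ
  | .nil => ∅
  | .cons E _ b => E.bv ∪ b.bv
end

def Env.domList : Env → List (Option ℕ)
  | .nil => []
  | .cons E z _ => z :: E.domList

def Bite.isVal : Bite → Prop
  | .app _ _ => False
  | _ => True

/-- every entry maps a variable to a crumbled value -/
def Env.IsVEnv : Env → Prop
  | .nil => True
  | .cons E _ b => E.IsVEnv ∧ b.isVal

/-- a crumble: nonempty environment whose leftmost entry binds `*` -/
def Env.IsCrumble : Env → Prop
  | .nil => False
  | .cons .nil z _ => z = none
  | .cons E _ _ => E.IsCrumble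

def Env.lookup : Env → ℕ → Option Bite
  | .nil, _ => none
  | .cons E (some y) b, x => if y = x then some b else E.lookup x
  | .cons E none _, x => E.lookup x

-- substitution of a variable for a variable, leaving domains untouched 
mutual
def Bite.rename : Bite → ℕ → ℕ → Bite
  | .app a b, z, y => .app (if a = z then y else a) (if b = z then y else b)
  | .lamVar x w, z, y =>
      if x = z then .lamVar x w else .lamVar x (if w = z then y else w)
  | .lam x E, z, y => if x = z then .lam x E else .lam x (E.rename z y)
def Env.rename : Env → ℕ → ℕ → Env
  | .nil, _, _ => .nil
  | .cons E x b, z, y => .cons (E.rename z y) x (b.rename z y)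
end

/-- replace the binder of the leftmost entry -/
def Env.setHead : Env → Option ℕ → Env
  | .nil, _ => .nil
  | .cons .nil _ b, z => .cons .nil z b
  | .cons E x b, z => .cons (E.setHead z) x b

def Env.len : Env → ℕ
  | .nil => 0
  | .cons E _ _ => E.len + 1

mutual
def Bite.size : Bite → ℕ
  | .app _ _ => 2
  | .lamVar _ _ => 2
  | .lam _ E => E.size + 1
def Env.size : Env → ℕ
  | .nil => 0
  | .cons E _ b => E.size + b.size
end

/-- reduction of the finest crumbled calculus -/
inductive Step : Env → Env → Prop
  | m1 {E Ev : Env} {z : Option ℕ} {x y x₁ : ℕ} {Eb : Env} :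
      Ev.IsVEnv → Ev.lookup x = some (.lam x₁ Eb) → Eb.IsCrumble →
      Step ((E.cons z (.app x y)).append Ev)
           ((E.append ((Eb.rename x₁ y).setHead z)).append Ev)
  | m2 {E Ev : Env} {z : Option ℕ} {x y x₁ y₁ : ℕ} {v : Bite} :
      Ev.IsVEnv → Ev.lookup x = some (.lamVar x₁ y₁) →
      Ev.lookup (if y₁ = x₁ then y else y₁) = some v →
      Step ((E.cons z (.app x y)).append Ev) ((E.cons z v).append Ev)

def maxVar : Tm → ℕ
  | .var x => x
  | .lam x t => max x (maxVar t)
  | .app t u => max (maxVar t) (maxVar u)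

/-- the finest crumbling translation, with a counter supplying fresh variables -/
def crumbA : Tm → ℕ → Env × ℕ
  | .var x, n => (.cons .nil none (.app x x), n)
  | .lam x (.var y), n => (.cons .nil none (.lamVar x y), n)
  | .lam x t, n =>
      let p := crumbA t n
      (.cons .nil none (.lam x p.1), p.2)
  | .app (.var x) (.var y), n => (.cons .nil none (.app x y), n)
  | .app u (.var y), n =>
      let p := crumbA u n
      ((Env.cons .nil none (.app p.2 y)).append (p.1.setHead (some p.2)), p.2 + 1)
  | .app (.var x) u', n =>
      let p := crumbA u' n
      ((Env.cons .nil none (.app x p.2)).append (p.1.setHead (some p.2)), p.2 + 1)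
  | .app u u', n =>
      let p := crumbA u n
      let q := crumbA u' p.2
      (((Env.cons .nil none (.app q.2 (q.2 + 1))).append
          (p.1.setHead (some q.2))).append (q.1.setHead (some (q.2 + 1))),
       q.2 + 2)

def crumb (t : Tm) : Env := (crumbA t (maxVar t + 1)).1

-- read-back of bites and environments 
mutual
def Bite.rb : Bite → Tm
  | .app x y => .app (.var x) (.var y)
  | .lamVar x y => .lam x (.var y)
  | .lam x E => .lam x (Env.rb E)
def Env.rb : Env → Tm
  | .nil => .var 0
  | .cons .nil _ b => Bite.rb b
  | .cons E (some z) b => (Env.rb E).subst z (Bite.rb b)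
  | .cons (.cons E w b') none b => Env.rb (.cons E w b')
end

/-- the parallel substitution σ_{E_v} applied to a term -/
def Env.applySigma : Env → Tm → Tm
  | .nil, t => t
  | .cons E (some x) b, t => (E.applySigma t).subst x (Bite.rb b)
  | .cons E none _, t => E.applySigma t

/-- σ applied to the non-hole parts of a right v-context -/
def Env.applySigmaR : Env → RCtx → RCtx
  | _, .hole => .hole
  | Ev, .appL u R => .appL (Ev.applySigma u) (Ev.applySigmaR R)
  | Ev, .appR R v => .appR (Ev.applySigmaR R) (Ev.applySigma v)

def Env.WellNamed (E : Env) : Prop :=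
  E.domList.Nodup ∧
  (∀ x : ℕ, some x ∈ E.domList → x ∉ E.bv) ∧
  (∀ (E₁ : Env) (z : Option ℕ) (b : Bite) (E₂ : Env),
     E = (E₁.cons z b).append E₂ →
     ∀ v : ℕ, z = some v → v ∉ b.fv ∧ v ∉ E₂.fv)

/-- lookup returning the read-back of the bound value, defaulting to the variable -/
def Env.lookTm (E : Env) (x : ℕ) : Tm :=
  match E.lookup x with
  | some b => b.rb
  | none => .var x

/-- RCAM: history entries and states -/
inductive HEntry where
  | unit : HEntry
  | pair : ℕ → ℕ → HEntry

abbrev MState := Env × Env × List HEntry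

inductive FStep : MState → MState → Prop
  | sea {E₁ Ev : Env} {H : List HEntry} {x : Option ℕ} {v : Bite} :
      v.isVal →
      FStep (E₁.cons x v, Ev, H) (E₁, (Env.cons .nil x v).append Ev, .unit :: H)
  | m1 {E₁ Ev : Env} {H : List HEntry} {z : Option ℕ} {x y x₁ : ℕ} {Eb : Env} :
      Ev.IsVEnv → Ev.lookup x = some (.lam x₁ Eb) → Eb.IsCrumble →
      FStep (E₁.cons z (.app x y), Ev, H)
            (E₁.append ((Eb.rename x₁ y).setHead z), Ev, .pair x y :: H)
  | m2 {E₁ Ev : Env} {H : List HEntry} {z : Option ℕ} {x y x₁ y₁ : ℕ} {v : Bite} :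
      Ev.IsVEnv → Ev.lookup x = some (.lamVar x₁ y₁) →
      Ev.lookup (if y₁ = x₁ then y else y₁) = some v →
      FStep (E₁.cons z (.app x y), Ev, H)
            (E₁, (Env.cons .nil z v).append Ev, .pair x y :: H)

inductive BStep : MState → MState → Prop
  | sea {E₁ Ev : Env} {H : List HEntry} {x : Option ℕ} {v : Bite} :
      v.isVal →
      BStep (E₁, (Env.cons .nil x v).append Ev, .unit :: H) (E₁.cons x v, Ev, H)
  | m1 {E₁ Ev D : Env} {H : List HEntry} {z : Option ℕ} {x y x₁ : ℕ}
       {Eb : Env} {b' : Bite} :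
      Ev.IsVEnv → Ev.lookup x = some (.lam x₁ Eb) → Eb.IsCrumble →
      D.len = Eb.len - 1 →
      BStep ((E₁.cons z b').append D, Ev, .pair x y :: H)
            (E₁.cons z (.app x y), Ev, H)
  | m2 {E₁ Ev : Env} {H : List HEntry} {z : Option ℕ} {x y x₁ y₁ : ℕ} {w : Bite} :
      Ev.IsVEnv → Ev.lookup x = some (.lamVar x₁ y₁) →
      BStep (E₁, (Env.cons .nil z w).append Ev, .pair x y :: H)
            (E₁.cons z (.app x y), Ev, H)


/-! ### Auxiliary definitions and lemmas for well-namedness -/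

mutual
def Bite.allFv : Bite → Finset ℕ
  | .app x y => {x, y}
  | .lamVar _ y => {y}
  | .lam _ E => E.allFv
def Env.allFv : Env → Finset ℕ
  | .nil => ∅
  | .cons E _ b => E.allFv ∪ b.allFv
end

theorem Env.append_nil (E : Env) : E.append .nil = E := rfl

theorem Env.cons_append_ne_nil (E : Env) (z : Option ℕ) (b : Bite) (E' : Env) :
    (E.cons z b).append E' ≠ .nil := by
  cases E' <;> simp [Env.append]

theorem Env.append_assoc (E E' : Env) : ∀ E'' : Env,
    (E.append E').append E'' = E.append (E'.append E'')
  | .nil => rfl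
  | .cons E2 z b => by simp [Env.append, Env.append_assoc E E' E2]

theorem Env.domList_append (E : Env) : ∀ E' : Env,
    (E.append E').domList = E'.domList ++ E.domList
  | .nil => rfl
  | .cons E2 z b => by simp [Env.append, Env.domList, Env.domList_append E E2]

theorem Env.bv_append (E : Env) : ∀ E' : Env, (E.append E').bv = E.bv ∪ E'.bv
  | .nil => by simp [Env.append, Env.bv]
  | .cons E2 z b => by simp [Env.append, Env.bv, Env.bv_append E E2, Finset.union_assoc]

theorem Env.allFv_append (E : Env) : ∀ E' : Env, (E.append E').allFv = E.allFv ∪ E'.allFv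
  | .nil => by simp [Env.append, Env.allFv]
  | .cons E2 z b => by simp [Env.append, Env.allFv, Env.allFv_append E E2, Finset.union_assoc]

theorem Env.fv_append_subset (E : Env) : ∀ E' : Env, (E.append E').fv ⊆ E.fv ∪ E'.fv
  | .nil => by simp [Env.append, Env.fv]
  | .cons E2 none b => by
      simp only [Env.append, Env.fv]
      intro a ha
      rcases Finset.mem_union.1 ha with h | h
      · rcases Finset.mem_union.1 (Env.fv_append_subset E E2 h) with h | h
        · exact Finset.mem_union_left _ h
        · exact Finset.mem_union_right _ (Finset.mem_union_left _ h)
      · exact Finset.mem_union_right _ (Finset.mem_union_right _ h)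
  | .cons E2 (some x) b => by
      simp only [Env.append, Env.fv]
      intro a ha
      rcases Finset.mem_union.1 ha with h | h
      · rcases Finset.mem_union.1 (Env.fv_append_subset E E2 (Finset.mem_of_mem_erase h))
          with h' | h'
        · exact Finset.mem_union_left _ h'
        · refine Finset.mem_union_right _ (Finset.mem_union_left _ ?_)
          exact Finset.mem_erase.2 ⟨(Finset.mem_erase.1 h).1, h'⟩
      · exact Finset.mem_union_right _ (Finset.mem_union_right _ h)

mutual
theorem Bite.fv_subset_allFv : ∀ b : Bite, b.fv ⊆ b.allFv
  | .app x y => by simp [Bite.fv, Bite.allFv]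
  | .lamVar x y => by
      simp only [Bite.fv, Bite.allFv]
      exact Finset.sdiff_subset
  | .lam x E => by
      simp only [Bite.fv, Bite.allFv]
      exact (Finset.erase_subset _ _).trans (Env.fv_subset_allFv E)
theorem Env.fv_subset_allFv : ∀ E : Env, E.fv ⊆ E.allFv
  | .nil => by simp [Env.fv, Env.allFv]
  | .cons E none b => by
      simp only [Env.fv, Env.allFv]
      exact Finset.union_subset_union (Env.fv_subset_allFv E) (Bite.fv_subset_allFv b)
  | .cons E (some z) b => by
      simp only [Env.fv, Env.allFv]
      exact Finset.union_subset_union ((Finset.erase_subset _ _).trans (Env.fv_subset_allFv E))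
        (Bite.fv_subset_allFv b)
end

theorem Env.fv_setHead : ∀ (E : Env) (z : Option ℕ), (E.setHead z).fv = E.fv
  | .nil, _ => rfl
  | .cons .nil x c, z => by cases z <;> cases x <;> simp [Env.setHead, Env.fv]
  | .cons (.cons E'' y d) x c, z => by
      cases x <;> simp [Env.setHead, Env.fv, Env.fv_setHead (.cons E'' y d) z]

theorem Env.bv_setHead : ∀ (E : Env) (z : Option ℕ), (E.setHead z).bv = E.bv
  | .nil, _ => rfl
  | .cons .nil x c, z => by simp [Env.setHead, Env.bv]
  | .cons (.cons E'' y d) x c, z => by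
      simp [Env.setHead, Env.bv, Env.bv_setHead (.cons E'' y d) z]

theorem Env.allFv_setHead : ∀ (E : Env) (z : Option ℕ), (E.setHead z).allFv = E.allFv
  | .nil, _ => rfl
  | .cons .nil x c, z => by simp [Env.setHead, Env.allFv]
  | .cons (.cons E'' y d) x c, z => by
      simp [Env.setHead, Env.allFv, Env.allFv_setHead (.cons E'' y d) z]

theorem Env.domList_setHead : ∀ (E : Env), E ≠ .nil → ∀ z : Option ℕ,
    (E.setHead z).domList = E.domList.dropLast ++ [z]
  | .nil, hE, _ => absurd rfl hE
  | .cons .nil x c, _, z => by simp [Env.setHead, Env.domList]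
  | .cons (.cons E'' y d) x c, _, z => by
      have h' : Env.domList (.cons E'' y d) ≠ [] := by simp [Env.domList]
      simp [Env.setHead, Env.domList, Env.domList_setHead (.cons E'' y d) (by simp) z,
        List.dropLast_cons_of_ne_nil h']

theorem Env.append_split : ∀ (E₂ Y X E₁ : Env) (z : Option ℕ) (b : Bite),
    X.append Y = (E₁.cons z b).append E₂ →
    (∃ X₂, X = (E₁.cons z b).append X₂ ∧ E₂ = X₂.append Y) ∨
    (∃ Y₁ Y₂, Y = (Y₁.cons z b).append Y₂ ∧ E₁ = X.append Y₁ ∧ E₂ = Y₂)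
  | .nil, .nil, X, E₁, z, b, h => by
      left; exact ⟨.nil, h, rfl⟩
  | .nil, .cons Y' w c, X, E₁, z, b, h => by
      right
      simp only [Env.append] at h
      injection h with h1 h2 h3
      exact ⟨Y', .nil, by rw [h2, h3]; rfl, h1.symm, rfl⟩
  | .cons E₂' u d, .nil, X, E₁, z, b, h => by
      left; exact ⟨.cons E₂' u d, h, rfl⟩
  | .cons E₂' u d, .cons Y' w c, X, E₁, z, b, h => by
      simp only [Env.append] at h
      injection h with h1 h2 h3
      rcases Env.append_split E₂' Y' X E₁ z b h1 with ⟨X₂, hX, hE⟩ | ⟨Y₁, Y₂, hY, hE1, hE2⟩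
      · left
        exact ⟨X₂, hX, by rw [hE, h2, h3]; rfl⟩
      · right
        refine ⟨Y₁, .cons Y₂ u d, ?_, hE1, by rw [hE2]⟩
        rw [hY, h2, h3]; rfl

theorem Env.setHead_split : ∀ (E₂ E E₁ : Env) (w z : Option ℕ) (b : Bite),
    E.setHead w = (E₁.cons z b).append E₂ →
    (∃ E₁' : Env, E₁' ≠ .nil ∧ E = (E₁'.cons z b).append E₂ ∧ E₁ = E₁'.setHead w) ∨
    (E₁ = .nil ∧ z = w ∧ ∃ z₀ : Option ℕ, E = (Env.cons .nil z₀ b).append E₂)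
  | E₂, .nil, E₁, w, z, b, h => by
      exact absurd h.symm (Env.cons_append_ne_nil _ _ _ _)
  | .nil, .cons .nil x c, E₁, w, z, b, h => by
      right
      simp only [Env.setHead, Env.append] at h
      injection h with h1 h2 h3
      exact ⟨h1.symm, h2.symm, x, by rw [h3]; rfl⟩
  | .nil, .cons (.cons E'' y d) x c, E₁, w, z, b, h => by
      left
      simp only [Env.setHead, Env.append] at h
      injection h with h1 h2 h3
      exact ⟨.cons E'' y d, by simp, by rw [h2, h3]; rfl, h1.symm⟩
  | .cons E₂' u d0, .cons .nil x c, E₁, w, z, b, h => by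
      simp only [Env.setHead, Env.append] at h
      injection h with h1 h2 h3
      exact absurd h1.symm (Env.cons_append_ne_nil _ _ _ _)
  | .cons E₂' u d0, .cons (.cons E'' y d) x c, E₁, w, z, b, h => by
      simp only [Env.setHead, Env.append] at h
      injection h with h1 h2 h3
      rcases Env.setHead_split E₂' (.cons E'' y d) E₁ w z b h1 with
        ⟨E₁', hne, hEq, hset⟩ | ⟨hE1, hzw, z₀, hEq⟩
      · left
        exact ⟨E₁', hne, by rw [h2, h3, hEq]; rfl, hset⟩
      · right
        exact ⟨hE1, hzw, z₀, by rw [h2, h3, hEq]; rfl⟩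

theorem Env.mem_domList_of_split (E₁ : Env) (z : Option ℕ) (b : Bite) (E₂ : Env) :
    z ∈ ((E₁.cons z b).append E₂).domList := by
  rw [Env.domList_append]
  simp [Env.domList]

theorem Env.fv_graft (A : Env) (v : ℕ) :
    ∀ E : Env, E ≠ .nil → (A.append (E.setHead (some v))).fv ⊆ A.fv.erase v ∪ E.fv
  | .nil, hE => absurd rfl hE
  | .cons .nil x c, _ => by
      cases x <;>
      · simp only [Env.setHead, Env.append, Env.fv]
        intro a ha
        simp only [Finset.mem_union, Finset.mem_erase] at ha ⊢
        tauto
  | .cons (.cons E'' y d) x c, _ => by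
      have ih := Env.fv_graft A v (.cons E'' y d) (by simp)
      cases x with
      | none =>
        simp only [Env.setHead, Env.append, Env.fv]
        intro a ha
        rcases Finset.mem_union.1 ha with h | h
        · rcases Finset.mem_union.1 (ih h) with h' | h'
          · exact Finset.mem_union_left _ h'
          · exact Finset.mem_union_right _ (Finset.mem_union_left _ h')
        · exact Finset.mem_union_right _ (Finset.mem_union_right _ h)
      | some x =>
        simp only [Env.setHead, Env.append, Env.fv]
        intro a ha
        rcases Finset.mem_union.1 ha with h | h
        · obtain ⟨hax, h⟩ := Finset.mem_erase.1 h
          rcases Finset.mem_union.1 (ih h) with h' | h'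
          · exact Finset.mem_union_left _ h'
          · exact Finset.mem_union_right _
              (Finset.mem_union_left _ (Finset.mem_erase.2 ⟨hax, h'⟩))
        · exact Finset.mem_union_right _ (Finset.mem_union_right _ h)

def CrumbInv (n m k : ℕ) (E : Env) : Prop :=
  n ≤ m ∧
  (∃ L : List ℕ, E.domList = L.map some ++ [none] ∧ L.Nodup ∧ ∀ x ∈ L, n ≤ x ∧ x < m) ∧
  E.fv ⊆ Finset.range (k+1) ∧
  E.bv ⊆ Finset.range (k+1) ∧
  E.allFv ⊆ Finset.range m ∧
  ∀ (E₁ : Env) (z : Option ℕ) (b : Bite) (E₂ : Env), E = (E₁.cons z b).append E₂ →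
    ∀ v : ℕ, z = some v → v ∉ b.fv ∧ v ∉ E₂.fv

theorem Env.ne_nil_of_domList {E : Env} {L : List ℕ}
    (h : E.domList = L.map some ++ [none]) : E ≠ .nil := by
  intro hE
  rw [hE] at h
  simp [Env.domList] at h

theorem single_split {b : Bite} {E₁ : Env} {z : Option ℕ} {c : Bite} {E₂ : Env}
    (h : Env.cons .nil none b = (E₁.cons z c).append E₂) : z = none := by
  cases E₂ with
  | nil =>
    injection h with h1 h2 h3
    exact h2.symm
  | cons E₂' u d =>
    simp only [Env.append] at h
    injection h with h1 h2 h3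
    exact absurd h1.symm (Env.cons_append_ne_nil _ _ _ _)

theorem inv_single {n m k : ℕ} (b : Bite) (hnm : n ≤ m)
    (hfv : b.fv ⊆ Finset.range (k+1)) (hbv : b.bv ⊆ Finset.range (k+1))
    (hall : b.allFv ⊆ Finset.range m) : CrumbInv n m k (.cons .nil none b) := by
  refine ⟨hnm, ⟨[], by simp [Env.domList], by simp, by simp⟩, ?_, ?_, ?_, ?_⟩
  · simpa [Env.fv] using hfv
  · simpa [Env.bv] using hbv
  · simpa [Env.allFv] using hall
  · intro E₁ z c E₂ hEq v hv
    rw [single_split hEq] at hv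
    cases hv

theorem inv_graft {n m k ku : ℕ} {E : Env} (hInv : CrumbInv n m ku E)
    (hku : ku ≤ k) (hkn : k < n) (a c : ℕ)
    (ha : a = m ∨ a ≤ k) (hc : c = m ∨ c ≤ k) :
    CrumbInv n (m+1) k ((Env.cons .nil none (.app a c)).append (E.setHead (some m))) := by
  obtain ⟨hnm, ⟨L, hdom, hnod, hbd⟩, hfv, hbv, hall, hsplit⟩ := hInv
  have hEne : E ≠ .nil := Env.ne_nil_of_domList hdom
  refine ⟨hnm.trans (Nat.le_succ m), ⟨L ++ [m], ?_, ?_, ?_⟩, ?_, ?_, ?_, ?_⟩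
  · rw [Env.domList_append, Env.domList_setHead E hEne, hdom, List.dropLast_concat]
    simp [Env.domList]
  · refine List.Nodup.append hnod (by simp) ?_
    intro x hx hx'
    simp only [List.mem_singleton] at hx'
    have := (hbd _ hx).2
    omega
  · intro x hx
    rcases List.mem_append.1 hx with h | h
    · exact ⟨(hbd _ h).1, (hbd _ h).2.trans (Nat.lt_succ_self m)⟩
    · simp only [List.mem_singleton] at h
      exact ⟨by omega, by omega⟩
  · -- fv
    intro x hx
    have := Env.fv_graft (Env.cons .nil none (.app a c)) m E hEne hx
    rcases Finset.mem_union.1 this with h | h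
    · obtain ⟨hxm, h⟩ := Finset.mem_erase.1 h
      simp only [Env.fv, Bite.fv, Finset.empty_union, Finset.mem_insert,
        Finset.mem_singleton] at h
      rcases h with h | h <;> subst h
      · rcases ha with h' | h'
        · exact absurd h' hxm
        · exact Finset.mem_range.2 (Nat.lt_succ_of_le h')
      · rcases hc with h' | h'
        · exact absurd h' hxm
        · exact Finset.mem_range.2 (Nat.lt_succ_of_le h')
    · have := Finset.mem_range.1 (hfv h)
      exact Finset.mem_range.2 (by omega)
  · -- bv
    rw [Env.bv_append, Env.bv_setHead]
    intro x hx
    rcases Finset.mem_union.1 hx with h | h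
    · simp [Env.bv, Bite.bv] at h
    · have := Finset.mem_range.1 (hbv h)
      exact Finset.mem_range.2 (by omega)
  · -- allFv
    rw [Env.allFv_append, Env.allFv_setHead]
    intro x hx
    rcases Finset.mem_union.1 hx with h | h
    · simp only [Env.allFv, Bite.allFv, Finset.empty_union, Finset.mem_insert,
        Finset.mem_singleton] at h
      rcases h with h | h <;> subst h
      · rcases ha with h' | h' <;> exact Finset.mem_range.2 (by omega)
      · rcases hc with h' | h' <;> exact Finset.mem_range.2 (by omega)
    · have := Finset.mem_range.1 (hall h)
      exact Finset.mem_range.2 (by omega)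
  · -- splits
    intro E₁ z b E₂ hEq v hv
    subst hv
    rcases Env.append_split E₂ (E.setHead (some m)) (Env.cons .nil none (.app a c))
        E₁ (some v) b hEq with
      ⟨X₂, hX, hE2⟩ | ⟨Y₁, Y₂, hY, hE1, hE2⟩
    · exact absurd (single_split hX) (by simp)
    · rcases Env.setHead_split Y₂ E Y₁ (some m) (some v) b hY with
        ⟨E₁', _, hEeq, _⟩ | ⟨_, hzw, z₀, hEeq⟩
      · obtain ⟨h1, h2⟩ := hsplit E₁' (some v) b Y₂ hEeq v rfl
        exact ⟨h1, hE2 ▸ h2⟩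
      · injection hzw with hvm
        subst hvm
        have hbsub : b.allFv ⊆ E.allFv := by
          rw [hEeq, Env.allFv_append]
          intro x hx
          exact Finset.mem_union_left _ (by simp [Env.allFv, hx])
        have hY₂sub : Y₂.allFv ⊆ E.allFv := by
          rw [hEeq, Env.allFv_append]
          intro x hx
          exact Finset.mem_union_right _ hx
        constructor
        · intro hmem
          have := Finset.mem_range.1 (hall (hbsub (Bite.fv_subset_allFv b hmem)))
          omega
        · intro hmem
          rw [hE2] at hmem
          have := Finset.mem_range.1 (hall (hY₂sub (Env.fv_subset_allFv Y₂ hmem)))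
          omega

theorem inv_lam {n m k kt x : ℕ} {E : Env} (hInv : CrumbInv n m kt E)
    (hx : x ≤ k) (hkt : kt ≤ k) :
    CrumbInv n m k (.cons .nil none (.lam x E)) := by
  obtain ⟨hnm, _, hfv, hbv, hall, _⟩ := hInv
  refine inv_single _ hnm ?_ ?_ ?_
  · simp only [Bite.fv]
    intro a ha
    have := Finset.mem_range.1 (hfv (Finset.mem_of_mem_erase ha))
    exact Finset.mem_range.2 (by omega)
  · simp only [Bite.bv]
    intro a ha
    rcases Finset.mem_insert.1 ha with h | h
    · exact Finset.mem_range.2 (by omega)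
    · have := Finset.mem_range.1 (hbv h)
      exact Finset.mem_range.2 (by omega)
  · simpa [Bite.allFv] using hall

theorem inv_graft2 {n k ku ku' mp mq : ℕ} {Ep Eq : Env}
    (h1 : CrumbInv n mp ku Ep) (h2 : CrumbInv mp mq ku' Eq)
    (hku : ku ≤ k) (hku' : ku' ≤ k) (hkn : k < n) :
    CrumbInv n (mq+2) k
      (((Env.cons .nil none (.app mq (mq+1))).append (Ep.setHead (some mq))).append
        (Eq.setHead (some (mq+1)))) := by
  obtain ⟨hnmp, ⟨Lp, hdomp, hnodp, hbdp⟩, hfvp, hbvp, hallp, hsplitp⟩ := h1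
  obtain ⟨hmpmq, ⟨Lq, hdomq, hnodq, hbdq⟩, hfvq, hbvq, hallq, hsplitq⟩ := h2
  have hEpne : Ep ≠ .nil := Env.ne_nil_of_domList hdomp
  have hEqne : Eq ≠ .nil := Env.ne_nil_of_domList hdomq
  refine ⟨by omega, ⟨Lq ++ (mq+1) :: (Lp ++ [mq]), ?_, ?_, ?_⟩, ?_, ?_, ?_, ?_⟩
  · rw [Env.domList_append, Env.domList_append, Env.domList_setHead Eq hEqne,
      Env.domList_setHead Ep hEpne, hdomp, hdomq, List.dropLast_concat,
      List.dropLast_concat]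
    simp [Env.domList]
  · refine List.Nodup.append hnodq ?_ ?_
    · refine List.Nodup.cons ?_ (List.Nodup.append hnodp (by simp) ?_)
      · intro hmem
        rcases List.mem_append.1 hmem with h | h
        · have := hbdp _ h; omega
        · have : mq + 1 = mq := by simpa using h
          omega
      · intro a ha ha'
        simp at ha'
        have := hbdp _ ha; omega
    · intro a ha ha'
      have hq := hbdq _ ha
      rcases List.mem_cons.1 ha' with h | h
      · omega
      · rcases List.mem_append.1 h with h | h
        · have := hbdp _ h; omega
        · simp at h; omega
  · intro x hx
    rcases List.mem_append.1 hx with h | h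
    · have := hbdq _ h; omega
    · rcases List.mem_cons.1 h with h | h
      · omega
      · rcases List.mem_append.1 h with h | h
        · have := hbdp _ h; omega
        · simp at h; omega
  · -- fv
    intro x hx
    have s2 := Env.fv_graft ((Env.cons .nil none (.app mq (mq+1))).append
      (Ep.setHead (some mq))) (mq+1) Eq hEqne hx
    rcases Finset.mem_union.1 s2 with h | h
    · obtain ⟨hx1, h⟩ := Finset.mem_erase.1 h
      have s1 := Env.fv_graft (Env.cons .nil none (.app mq (mq+1))) mq Ep hEpne h
      rcases Finset.mem_union.1 s1 with h' | h'
      · obtain ⟨hx2, h'⟩ := Finset.mem_erase.1 h'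
        simp only [Env.fv, Bite.fv, Finset.empty_union, Finset.mem_insert,
          Finset.mem_singleton] at h'
        rcases h' with h' | h' <;> omega
      · have := Finset.mem_range.1 (hfvp h')
        exact Finset.mem_range.2 (by omega)
    · have := Finset.mem_range.1 (hfvq h)
      exact Finset.mem_range.2 (by omega)
  · -- bv
    rw [Env.bv_append, Env.bv_append, Env.bv_setHead, Env.bv_setHead]
    intro x hx
    rcases Finset.mem_union.1 hx with h | h
    · rcases Finset.mem_union.1 h with h' | h'
      · simp [Env.bv, Bite.bv] at h'
      · have := Finset.mem_range.1 (hbvp h')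
        exact Finset.mem_range.2 (by omega)
    · have := Finset.mem_range.1 (hbvq h)
      exact Finset.mem_range.2 (by omega)
  · -- allFv
    rw [Env.allFv_append, Env.allFv_append, Env.allFv_setHead, Env.allFv_setHead]
    intro x hx
    rcases Finset.mem_union.1 hx with h | h
    · rcases Finset.mem_union.1 h with h' | h'
      · simp only [Env.allFv, Bite.allFv, Finset.empty_union, Finset.mem_insert,
          Finset.mem_singleton] at h'
        exact Finset.mem_range.2 (by omega)
      · have := Finset.mem_range.1 (hallp h')
        exact Finset.mem_range.2 (by omega)
    · have := Finset.mem_range.1 (hallq h)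
      exact Finset.mem_range.2 (by omega)
  · -- splits
    intro E₁ z b E₂ hEq v hv
    subst hv
    rcases Env.append_split E₂ (Eq.setHead (some (mq+1)))
        ((Env.cons .nil none (.app mq (mq+1))).append (Ep.setHead (some mq)))
        E₁ (some v) b hEq with
      ⟨X₂, hX, hE2⟩ | ⟨Y₁, Y₂, hY, hE1, hE2⟩
    · -- split inside A.append P
      rcases Env.append_split X₂ (Ep.setHead (some mq)) (Env.cons .nil none (.app mq (mq+1)))
          E₁ (some v) b hX with
        ⟨X₃, hX3, hX2eq⟩ | ⟨Z₁, Z₂, hZ, hE1', hX2eq⟩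
      · exact absurd (single_split hX3) (by simp)
      · -- split inside P = Ep.setHead (some mq)
        rcases Env.setHead_split Z₂ Ep Z₁ (some mq) (some v) b hZ with
          ⟨E₁', _, hEpEq, _⟩ | ⟨_, hzw, z₀, hEpEq⟩
        · -- interior split of Ep
          obtain ⟨hb, hZ₂⟩ := hsplitp E₁' (some v) b Z₂ hEpEq v rfl
          have hvLp : v ∈ Lp := by
            have hmem := Env.mem_domList_of_split E₁' (some v) b Z₂
            rw [← hEpEq, hdomp] at hmem
            rcases List.mem_append.1 hmem with h | h
            · obtain ⟨a, ha1, ha2⟩ := List.mem_map.1 h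
              injection ha2 with ha2
              exact ha2 ▸ ha1
            · simp at h
          have hvn : n ≤ v := (hbdp _ hvLp).1
          refine ⟨hb, ?_⟩
          rw [hE2, hX2eq]
          intro hmem
          rcases Finset.mem_union.1 (Env.fv_append_subset _ _ hmem) with h | h
          · exact hZ₂ h
          · rw [Env.fv_setHead] at h
            have := Finset.mem_range.1 (hfvq h)
            omega
        · -- head split of Ep : v = mq
          injection hzw with hvm
          subst hvm
          have hbsub : b.allFv ⊆ Ep.allFv := by
            rw [hEpEq, Env.allFv_append]
            intro x hx
            exact Finset.mem_union_left _ (by simp [Env.allFv, hx])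
          have hZ₂sub : Z₂.allFv ⊆ Ep.allFv := by
            rw [hEpEq, Env.allFv_append]
            intro x hx
            exact Finset.mem_union_right _ hx
          constructor
          · intro hmem
            have := Finset.mem_range.1 (hallp (hbsub (Bite.fv_subset_allFv b hmem)))
            omega
          · rw [hE2, hX2eq]
            intro hmem
            rcases Finset.mem_union.1 (Env.fv_append_subset _ _ hmem) with h | h
            · have := Finset.mem_range.1 (hallp (hZ₂sub (Env.fv_subset_allFv Z₂ h)))
              omega
            · rw [Env.fv_setHead] at h
              have := Finset.mem_range.1 (hfvq h)
              omega
    · -- split inside Q = Eq.setHead (some (mq+1))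
      rcases Env.setHead_split Y₂ Eq Y₁ (some (mq+1)) (some v) b hY with
        ⟨E₁', _, hEqEq, _⟩ | ⟨_, hzw, z₀, hEqEq⟩
      · obtain ⟨hb, hY₂⟩ := hsplitq E₁' (some v) b Y₂ hEqEq v rfl
        exact ⟨hb, hE2 ▸ hY₂⟩
      · injection hzw with hvm
        subst hvm
        have hbsub : b.allFv ⊆ Eq.allFv := by
          rw [hEqEq, Env.allFv_append]
          intro x hx
          exact Finset.mem_union_left _ (by simp [Env.allFv, hx])
        have hY₂sub : Y₂.allFv ⊆ Eq.allFv := by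
          rw [hEqEq, Env.allFv_append]
          intro x hx
          exact Finset.mem_union_right _ hx
        constructor
        · intro hmem
          have := Finset.mem_range.1 (hallq (hbsub (Bite.fv_subset_allFv b hmem)))
          omega
        · rw [hE2]
          intro hmem
          have := Finset.mem_range.1 (hallq (hY₂sub (Env.fv_subset_allFv Y₂ hmem)))
          omega

theorem crumbA_inv (t : Tm) (n : ℕ) : maxVar t < n →
    CrumbInv n (crumbA t n).2 (maxVar t) (crumbA t n).1 := by
  induction t, n using crumbA.induct with
  | case1 x n =>
    intro h
    simp only [maxVar] at h ⊢
    simp only [crumbA]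
    refine inv_single _ le_rfl ?_ ?_ ?_
    · intro a ha
      simp [Bite.fv] at ha
      simp [Finset.mem_range, ha]
    · simp [Bite.bv]
    · intro a ha
      simp [Bite.allFv] at ha
      simp [Finset.mem_range]
      omega
  | case2 x y n =>
    intro h
    simp only [maxVar] at h ⊢
    simp only [crumbA]
    refine inv_single _ le_rfl ?_ ?_ ?_
    · intro a ha
      simp [Bite.fv] at ha
      simp [Finset.mem_range]
      omega
    · intro a ha
      simp [Bite.bv] at ha
      simp [Finset.mem_range]
      omega
    · intro a ha
      simp [Bite.allFv] at ha
      simp [Finset.mem_range]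
      omega
  | case3 x t n hne ih =>
    intro h
    simp only [maxVar] at h
    have ih' := ih (by omega)
    cases t with
    | var y => exact absurd rfl (hne y)
    | lam a s => simp only [crumbA]; exact inv_lam ih' (le_max_left _ _) (le_max_right _ _)
    | app a s => simp only [crumbA]; exact inv_lam ih' (le_max_left _ _) (le_max_right _ _)
  | case4 x y n =>
    intro h
    simp only [maxVar] at h ⊢
    simp only [crumbA]
    refine inv_single _ le_rfl ?_ ?_ ?_
    · intro a ha
      simp [Bite.fv] at ha
      simp [Finset.mem_range]
      omega
    · simp [Bite.bv]
    · intro a ha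
      simp [Bite.allFv] at ha
      simp [Finset.mem_range]
      omega
  | case5 u y n hne ih =>
    intro h
    simp only [maxVar] at h
    have ih' := ih (by omega)
    cases u with
    | var x => exact absurd rfl (hne x)
    | lam a s =>
      simp only [crumbA]; exact inv_graft ih' (le_max_left _ _) h _ _ (Or.inl rfl) (Or.inr (le_max_right _ _))
    | app a s =>
      simp only [crumbA]; exact inv_graft ih' (le_max_left _ _) h _ _ (Or.inl rfl) (Or.inr (le_max_right _ _))
  | case6 x u' n hne1 ih =>
    intro h
    simp only [maxVar] at h
    have ih' := ih (by omega)
    cases u' with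
    | var y => exact absurd rfl (hne1 y)
    | lam a s =>
      simp only [crumbA]; exact inv_graft ih' (le_max_right _ _) h _ _ (Or.inr (le_max_left _ _)) (Or.inl rfl)
    | app a s =>
      simp only [crumbA]; exact inv_graft ih' (le_max_right _ _) h _ _ (Or.inr (le_max_left _ _)) (Or.inl rfl)
  | case7 u u' n hne1 hne2 hne3 p ih ih' =>
    intro h
    simp only [maxVar] at h
    have h1 := ih (by omega)
    have h2 := ih' (by show maxVar u' < (crumbA u n).2; have := h1.1; omega)
    cases u with
    | var x => exact absurd rfl (hne3 x)
    | lam a s =>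
      cases u' with
      | var y => exact absurd rfl (hne2 y)
      | lam a' s' => simp only [crumbA]; exact inv_graft2 h1 h2 (le_max_left _ _) (le_max_right _ _) h
      | app a' s' => simp only [crumbA]; exact inv_graft2 h1 h2 (le_max_left _ _) (le_max_right _ _) h
    | app a s =>
      cases u' with
      | var y => exact absurd rfl (hne2 y)
      | lam a' s' => simp only [crumbA]; exact inv_graft2 h1 h2 (le_max_left _ _) (le_max_right _ _) h
      | app a' s' => simp only [crumbA]; exact inv_graft2 h1 h2 (le_max_left _ _) (le_max_right _ _) h

/-- the crumbling of any term is well-named. -/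
theorem crumb_wellNamed (t : Tm) : (crumb t).WellNamed := by
  obtain ⟨hnm, ⟨L, hdom, hnod, hbd⟩, hfv, hbv, hall, hsplit⟩ :=
    crumbA_inv t (maxVar t + 1) (Nat.lt_succ_self _)
  refine ⟨?_, ?_, ?_⟩
  · show (crumbA t (maxVar t + 1)).1.domList.Nodup
    rw [hdom]
    refine List.Nodup.append (hnod.map (fun a b hab => by injection hab)) (by simp) ?_
    intro a ha ha'
    simp at ha'
    subst ha'
    simp at ha
  · intro x hx
    show x ∉ (crumbA t (maxVar t + 1)).1.bv
    have hx' : (some x : Option ℕ) ∈ (crumbA t (maxVar t + 1)).1.domList := hx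
    rw [hdom] at hx'
    have hxL : x ∈ L := by
      rcases List.mem_append.1 hx' with h | h
      · obtain ⟨a, ha, hab⟩ := List.mem_map.1 h
        injection hab with hab
        exact hab ▸ ha
      · simp at h
    intro hmem
    have := Finset.mem_range.1 (hbv hmem)
    have := (hbd _ hxL).1
    omega
  · exact hsplit
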